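/- arXiv:1307.0289 — 4 statements merged into one kernel-verified Lean document; each statement's English description precedes it below -/
import Mathlib

section
/- In any FILL-category, for all objects A, B, C there exists an arrow ((A ⊸ B) ⅋ C) → (A ⊸ (B ⅋ C)). -/
open CategoryTheory MonoidalCategory MonoidalClosed

universe v u

/-- A FILL-category: a symmetric monoidal closed category `(⊗, I, ⊸)` equipped with
a second symmetric monoidal structure `(⅋, ⊥)` and natural weak distributivity arrows
`A ⊗ (B ⅋ C) ⟶ (A ⊗ B) ⅋ C`. -/
class FILLCategory (C : Type u) [Category.{v} C] [MonoidalCategory C]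
    [SymmetricCategory C] [MonoidalClosed C] where
  par : C → C → C
  bot : C
  parMap : ∀ {A A' B B' : C}, (A ⟶ A') → (B ⟶ B') → (par A B ⟶ par A' B')
  parMap_id : ∀ A B : C, parMap (𝟙 A) (𝟙 B) = 𝟙 (par A B)
  parAssoc : ∀ A B D : C, par (par A B) D ≅ par A (par B D)
  parLeftUnit : ∀ A : C, par bot A ≅ A
  parRightUnit : ∀ A : C, par A bot ≅ A
  parBraid : ∀ A B : C, par A B ≅ par B A
  wdist : ∀ A B D : C, A ⊗ par B D ⟶ par (A ⊗ B) D
  wdist_natural : ∀ {A A' B B' D D' : C} (f : A ⟶ A') (g : B ⟶ B') (h : D ⟶ D'),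
    (f ⊗ₘ parMap g h) ≫ wdist A' B' D' = wdist A B D ≫ parMap (f ⊗ₘ g) h

open FILLCategory

def parIhomMap {C : Type u} [Category.{v} C] [MonoidalCategory C] [SymmetricCategory C]
    [MonoidalClosed C] [FILLCategory C] (A B D : C) :
    par ((ihom A).obj B) D ⟶ (ihom A).obj (par B D) :=
  curry (wdist A ((ihom A).obj B) D ≫ parMap ((ihom.ev A).app B) (𝟙 D))

/-- In any FILL-category there is an arrow `(A ⊸ B) ⅋ C ⟶ A ⊸ (B ⅋ C)`. -/
theorem fill_par_ihom_arrow
    (C : Type u) [Category.{v} C] [MonoidalCategory C] [SymmetricCategory C]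
    [MonoidalClosed C] [FILLCategory C] (A B D : C) :
    Nonempty (par ((ihom A).obj B) D ⟶ (ihom A).obj (par B D)) :=
  ⟨parIhomMap A B D⟩
end

section
/- In any FILL-category, for all objects Γ₁, Γ₂, A, B, T₁, T₂ there exists an arrow ((Γ₁ ⊗ A) ⊸ T₁) ⊗ ((Γ₂ ⊗ B) ⊸ T₂) ⊗ Γ₁ ⊗ Γ₂ ⊗ (A ⅋ B) → T₁ ⅋ T₂. -/
open CategoryTheory MonoidalCategory MonoidalClosed

universe v u

open FILLCategory

/-!
The sequent `Γ₁ ⊗ A ⊸ T₁, Γ₂ ⊗ B ⊸ T₂, Γ₁, Γ₂, A ⅋ B ⊢ T₁ ⅋ T₂` is the `⅋`-left rule applied to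
the two evaluation arrows `(Γᵢ ⊗ X ⊸ Tᵢ) ⊗ Γᵢ ⊗ X ⟶ Tᵢ`. The rule itself is two weak
distributivities: `Γ₂` is pushed into the `B` component of `A ⅋ B` (after braiding `⅋`), where
the second arrow consumes it, and then `Γ₁` is pushed into the `A` component.
-/

section Evaluation

variable {C : Type u} [Category.{v} C] [MonoidalCategory C] [BraidedCategory C]
  [MonoidalClosed C]

def ihomEvalTensor (X Y T : C) : ((ihom (X ⊗ Y)).obj T ⊗ X) ⊗ Y ⟶ T :=
  (α_ _ X Y).hom ≫ (β_ _ (X ⊗ Y)).hom ≫ (ihom.ev (X ⊗ Y)).app T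

end Evaluation

section ParLeft

variable {C : Type u} [Category.{v} C] [MonoidalCategory C] [SymmetricCategory C]
  [MonoidalClosed C] [FILLCategory C]

def wdistLeft {X A T : C} (f : X ⊗ A ⟶ T) (D : C) : X ⊗ par A D ⟶ par T D :=
  wdist X A D ≫ parMap f (𝟙 D)

def wdistRight {Y B T : C} (g : Y ⊗ B ⟶ T) (D : C) : Y ⊗ par D B ⟶ par D T :=
  Y ◁ (parBraid D B).hom ≫ wdistLeft g D ≫ (parBraid T D).hom

def parLeft {X Y A B T₁ T₂ : C} (f : X ⊗ A ⟶ T₁) (g : Y ⊗ B ⟶ T₂) :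
    X ⊗ Y ⊗ par A B ⟶ par T₁ T₂ :=
  X ◁ wdistRight g A ≫ wdistLeft f T₂

end ParLeft

/-- Base case of soundness for `⅋`-left: there is an arrow
`((Γ₁ ⊗ A) ⊸ T₁) ⊗ ((Γ₂ ⊗ B) ⊸ T₂) ⊗ Γ₁ ⊗ Γ₂ ⊗ (A ⅋ B) ⟶ T₁ ⅋ T₂`. -/
theorem fill_merge_par_left
    (C : Type u) [Category.{v} C] [MonoidalCategory C] [SymmetricCategory C]
    [MonoidalClosed C] [FILLCategory C] (G1 G2 A B T1 T2 : C) :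
    Nonempty ((ihom (G1 ⊗ A)).obj T1 ⊗ (ihom (G2 ⊗ B)).obj T2 ⊗ G1 ⊗ G2 ⊗
      par A B ⟶ par T1 T2) := by
  let F1 := (ihom (G1 ⊗ A)).obj T1
  let F2 := (ihom (G2 ⊗ B)).obj T2
  let regroup : F1 ⊗ F2 ⊗ G1 ⊗ G2 ⊗ par A B ⟶ (F1 ⊗ G1) ⊗ (F2 ⊗ G2) ⊗ par A B :=
    (α_ F1 F2 _).inv ≫ tensorμ F1 F2 G1 (G2 ⊗ par A B) ≫ (F1 ⊗ G1) ◁ (α_ F2 G2 _).inv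
  exact ⟨regroup ≫ parLeft (ihomEvalTensor G1 A T1) (ihomEvalTensor G2 B T2)⟩
end

section
/- In any FILL-category, for all objects Γ, Γ', A, T, T' there exists an arrow (Γ ⊸ (((A ⊗ Γ') ⊸ T') ⅋ T)) → ((Γ ⊗ A) ⊸ ((Γ' ⊸ T') ⅋ T)). (Soundness of the antecedent propagation rule pl₁.) -/
open CategoryTheory MonoidalCategory MonoidalClosed

universe v u

open FILLCategory

/-! Evaluate at `Γ`, push `A` into the left `⅋`-component with the weak distributivity, and
there partially apply `(A ⊗ Γ') ⊸ T'` to `A`. -/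

section

variable {C : Type u} [Category.{v} C] [MonoidalCategory C]

def partialEval [BraidedCategory C] [MonoidalClosed C] (A B X : C) :
    A ⊗ (ihom (A ⊗ B)).obj X ⟶ (ihom B).obj X :=
  curry ((α_ B A _).inv ≫ (β_ B A).hom ▷ _ ≫ (ihom.ev (A ⊗ B)).app X)

def propagate [SymmetricCategory C] [MonoidalClosed C] [FILLCategory C] {A H K : C}
    (f : A ⊗ H ⟶ K) (G T : C) :
    (ihom G).obj (par H T) ⟶ (ihom (G ⊗ A)).obj (par K T) :=
  curry ((β_ G A).hom ▷ _ ≫ (α_ A G _).hom ≫ A ◁ (ihom.ev G).app (par H T) ≫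
    wdist A H T ≫ parMap f (𝟙 T))

end

/-- Soundness of the antecedent propagation rule `pl₁`: there is an arrow
`(Γ ⊸ (((A ⊗ Γ') ⊸ T') ⅋ T)) ⟶ ((Γ ⊗ A) ⊸ ((Γ' ⊸ T') ⅋ T))`. -/
theorem fill_pl1_sound
    (C : Type u) [Category.{v} C] [MonoidalCategory C] [SymmetricCategory C]
    [MonoidalClosed C] [FILLCategory C] (G G' A T T' : C) :
    Nonempty ((ihom G).obj (par ((ihom (A ⊗ G')).obj T') T) ⟶
      (ihom (G ⊗ A)).obj (par ((ihom G').obj T') T)) :=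
  ⟨propagate (partialEval A G' T') G T⟩
end

section
/- In any FILL-category, for all objects Γ, Γ', A, T, T' there exists an arrow (Γ ⊸ (T ⅋ A ⅋ (Γ' ⊸ T'))) → (Γ ⊸ (T ⅋ (Γ' ⊸ (T' ⅋ A)))). (Soundness of the succedent propagation rule pr₂.) -/
open CategoryTheory MonoidalCategory MonoidalClosed

universe v u

open FILLCategory

/-! The arrow is `Γ ⊸ (T ⅋ -)` applied to `A ⅋ (Γ' ⊸ T') ≅ (Γ' ⊸ T') ⅋ A ⟶ Γ' ⊸ (T' ⅋ A)`,
where the last arrow is the curried form of weak distributivity followed by evaluation: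
`Γ' ⊗ ((Γ' ⊸ T') ⅋ A) ⟶ (Γ' ⊗ (Γ' ⊸ T')) ⅋ A ⟶ T' ⅋ A`. -/

namespace FILLCategory

variable {C : Type u} [Category.{v} C] [MonoidalCategory C] [SymmetricCategory C]
  [MonoidalClosed C] [FILLCategory C]

def evPar (G T A : C) : G ⊗ par ((ihom G).obj T) A ⟶ par T A :=
  wdist G ((ihom G).obj T) A ≫ parMap ((ihom.ev G).app T) (𝟙 A)

def ihomParStrength (G T A : C) : par ((ihom G).obj T) A ⟶ (ihom G).obj (par T A) :=
  curry (evPar G T A)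

def pr2 (G G' A T T' : C) :
    (ihom G).obj (par T (par A ((ihom G').obj T'))) ⟶
      (ihom G).obj (par T ((ihom G').obj (par T' A))) :=
  (ihom G).map (parMap (𝟙 T) ((parBraid A _).hom ≫ ihomParStrength G' T' A))

end FILLCategory

/-- Soundness of the succedent propagation rule `pr₂`: there is an arrow
`(Γ ⊸ (T ⅋ A ⅋ (Γ' ⊸ T'))) ⟶ (Γ ⊸ (T ⅋ (Γ' ⊸ (T' ⅋ A))))`. -/
theorem fill_pr2_sound
    (C : Type u) [Category.{v} C] [MonoidalCategory C] [SymmetricCategory C]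
    [MonoidalClosed C] [FILLCategory C] (G G' A T T' : C) :
    Nonempty ((ihom G).obj (par T (par A ((ihom G').obj T'))) ⟶
      (ihom G).obj (par T ((ihom G').obj (par T' A)))) :=
  ⟨pr2 G G' A T T'⟩
end
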